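/- Let T be a finite tree in which every vertex has degree at most 3 and with L ≥ 2 leaves, where each leaf carries a nonnegative weight, the weights summing to W, and suppose no single leaf has weight more than (3/4)·W. Then there exists an edge e of T such that each of the two components of T − e contains leaves of total weight at most (3/4)·W. -/

import Mathlib

open Finset SimpleGraph

namespace Stmt7Aux

open scoped Classical

variable {V : Type*} [Fintype V] (G : SimpleGraph V)

/-- sum of leaf weights in the `c`-side after deleting edge `e` -/
noncomputable def sideSum (w : V → ℝ) (e : Sym2 V) (c : V) : ℝ :=
  ∑ v ∈ Finset.univ.filter (fun v => G.degree v = 1 ∧ (G.deleteEdges {e}).Reachable c v), w v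

noncomputable def comp (e : Sym2 V) (c : V) : Finset V :=
  Finset.univ.filter (fun v => (G.deleteEdges {e}).Reachable c v)

variable {G}

lemma reach_split {a b : V} (hab : G.Adj a b) {u v : V} (p : G.Walk u v) :
    ((G.deleteEdges {s(a,b)}).Reachable a u ∨ (G.deleteEdges {s(a,b)}).Reachable b u) →
    ((G.deleteEdges {s(a,b)}).Reachable a v ∨ (G.deleteEdges {s(a,b)}).Reachable b v) := by
  induction p with
  | nil => exact id
  | @cons u x v h q ih =>
    intro hu
    apply ih
    by_cases he : s(u, x) = s(a, b)
    · rw [Sym2.eq_iff] at he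
      rcases he with ⟨rfl, rfl⟩ | ⟨rfl, rfl⟩
      · exact Or.inr (Reachable.refl _)
      · exact Or.inl (Reachable.refl _)
    · have hadj : (G.deleteEdges {s(a,b)}).Adj u x := by
        rw [SimpleGraph.deleteEdges_adj]
        exact ⟨h, by simpa using he⟩
      exact hu.imp (fun h' => h'.trans hadj.reachable) (fun h' => h'.trans hadj.reachable)

lemma bridge (hT : G.IsTree) {a b : V} (hab : G.Adj a b) :
    ¬ (G.deleteEdges {s(a,b)}).Reachable a b :=
  ((SimpleGraph.isBridge_iff).mp
    ((isAcyclic_iff_forall_adj_isBridge.mp hT.IsAcyclic) hab))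

lemma side_partition (hT : G.IsTree) (w : V → ℝ) {a b : V} (hab : G.Adj a b) :
    sideSum G w s(a,b) a + sideSum G w s(a,b) b
      = ∑ v ∈ Finset.univ.filter (fun v => G.degree v = 1), w v := by
  classical
  have h1 : ∀ (c : V), Finset.univ.filter
      (fun v => G.degree v = 1 ∧ (G.deleteEdges {s(a,b)}).Reachable c v)
      = (Finset.univ.filter (fun v => G.degree v = 1)).filter
        (fun v => (G.deleteEdges {s(a,b)}).Reachable c v) := by
    intro c; rw [Finset.filter_filter]
  rw [sideSum, sideSum, h1 a, h1 b]
  rw [← Finset.sum_filter_add_sum_filter_not (Finset.univ.filter (fun v => G.degree v = 1))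
      (fun v => (G.deleteEdges {s(a,b)}).Reachable a v) w]
  congr 1
  refine Finset.sum_congr ?_ (fun _ _ => rfl)
  apply Finset.filter_congr
  intro v _
  constructor
  · intro hbv hav
    exact bridge hT hab (hav.trans hbv.symm)
  · intro hna
    obtain ⟨p⟩ := hT.isConnected.preconnected a v
    rcases reach_split hab p (Or.inl (Reachable.refl _)) with h | h
    · exact absurd h hna
    · exact h

lemma leaf_comp (hT : G.IsTree) {a b : V} (hab : G.Adj a b) (hdb : G.degree b = 1)
    {v : V} (hv : (G.deleteEdges {s(a,b)}).Reachable b v) : v = b := by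
  classical
  obtain ⟨p⟩ := hv
  cases p with
  | nil => rfl
  | @cons _ x _ h q =>
    exfalso
    rw [SimpleGraph.deleteEdges_adj] at h
    have hx : x ∈ G.neighborFinset b := by rw [mem_neighborFinset]; exact h.1
    have ha : a ∈ G.neighborFinset b := by rw [mem_neighborFinset]; exact hab.symm
    have : x = a := by
      have hcard : (G.neighborFinset b).card = 1 := by
        rw [← hdb]; rfl
      rw [Finset.card_eq_one] at hcard
      obtain ⟨c, hc⟩ := hcard
      rw [hc, Finset.mem_singleton] at hx ha
      rw [hx, ha]
    apply h.2
    rw [this, Sym2.eq_swap]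
    rfl

/-- descent step: a leaf on the `b`-side other than `b` lies on the `x`-side of
some edge `bx` with `x ≠ a`. -/
lemma step (hab : G.Adj a b) {v : V} (hv : (G.deleteEdges {s(a,b)}).Reachable b v)
    (hvb : v ≠ b) :
    ∃ x, G.Adj b x ∧ x ≠ a ∧ (G.deleteEdges {s(b,x)}).Reachable x v := by
  classical
  obtain ⟨p⟩ := hv
  obtain ⟨q, hq⟩ := p.toPath
  cases q with
  | nil => exact absurd rfl hvb.symm
  | @cons _ x _ h r =>
    rw [SimpleGraph.Walk.cons_isPath_iff] at hq
    rw [SimpleGraph.deleteEdges_adj] at h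
    refine ⟨x, h.1, ?_, ?_⟩
    · rintro rfl
      exact h.2 (by rw [Sym2.eq_swap]; rfl)
    · refine ⟨r.transfer _ (fun e he => ?_)⟩
      have h1 : e ∈ (G.deleteEdges {s(a,b)}).edgeSet := r.edges_subset_edgeSet he
      rw [SimpleGraph.edgeSet_deleteEdges] at h1 ⊢
      refine ⟨h1.1, ?_⟩
      intro hcon
      rw [Set.mem_singleton_iff] at hcon
      subst hcon
      exact hq.2 (r.fst_mem_support_of_mem_edges he)

lemma side_mono (hT : G.IsTree) {a b x : V} (hab : G.Adj a b) (hbx : G.Adj b x)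
    (hxa : x ≠ a) {v : V} (hv : (G.deleteEdges {s(b,x)}).Reachable x v) :
    (G.deleteEdges {s(a,b)}).Reachable b v := by
  classical
  obtain ⟨p⟩ := hv
  have hne : s(a,b) ≠ s(b,x) := by
    intro h
    rw [Sym2.eq_iff] at h
    rcases h with ⟨h1, h2⟩ | ⟨h1, h2⟩
    · rw [h1] at hab; exact G.irrefl hab
    · exact hxa h1.symm
  have hne' : s(b,x) ≠ s(a,b) := fun h => hne h.symm
  have hadjab : (G.deleteEdges {s(b,x)}).Adj a b := by
    rw [SimpleGraph.deleteEdges_adj]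
    exact ⟨hab, by simpa using hne⟩
  have hnotin : s(a,b) ∉ p.edges := by
    intro hmem
    have ha : a ∈ p.support := p.fst_mem_support_of_mem_edges hmem
    have : (G.deleteEdges {s(b,x)}).Reachable x a := ⟨p.takeUntil a ha⟩
    have : (G.deleteEdges {s(b,x)}).Reachable b x :=
      (this.trans hadjab.reachable).symm
    exact bridge hT hbx this
  have hadjbx : (G.deleteEdges {s(a,b)}).Adj b x := by
    rw [SimpleGraph.deleteEdges_adj]
    exact ⟨hbx, by simpa using hne'⟩
  refine hadjbx.reachable.trans ⟨p.transfer _ (fun e he => ?_)⟩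
  have h1 : e ∈ (G.deleteEdges {s(b,x)}).edgeSet := p.edges_subset_edgeSet he
  rw [SimpleGraph.edgeSet_deleteEdges] at h1 ⊢
  exact ⟨h1.1, fun hcon => hnotin (by rw [Set.mem_singleton_iff] at hcon; rw [← hcon]; exact he)⟩

lemma not_side (hT : G.IsTree) {b x : V} (hbx : G.Adj b x) :
    ¬ (G.deleteEdges {s(b,x)}).Reachable x b :=
  fun h => bridge hT hbx h.symm

lemma comp_card_lt (hT : G.IsTree) {a b x : V} (hab : G.Adj a b) (hbx : G.Adj b x)
    (hxa : x ≠ a) : (comp G s(b,x) x).card < (comp G s(a,b) b).card := by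
  classical
  apply Finset.card_lt_card
  rw [Finset.ssubset_iff_of_subset]
  · refine ⟨b, ?_, ?_⟩
    · simp only [comp, Finset.mem_filter, Finset.mem_univ, true_and]
      exact SimpleGraph.Reachable.refl _
    · simp only [comp, Finset.mem_filter, Finset.mem_univ, true_and]
      exact not_side hT hbx
  · intro v hv
    simp only [comp, Finset.mem_filter, Finset.mem_univ, true_and] at hv ⊢
    exact side_mono hT hab hbx hxa hv

lemma side_le (hT : G.IsTree) (w : V → ℝ) (hw : ∀ v, 0 ≤ w v) {a b x : V}
    (hab : G.Adj a b) (hbx : G.Adj b x) (hxa : x ≠ a) :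
    sideSum G w s(b,x) x ≤ sideSum G w s(a,b) b := by
  classical
  apply Finset.sum_le_sum_of_subset_of_nonneg
  · intro v hv
    simp only [Finset.mem_filter, Finset.mem_univ, true_and] at hv ⊢
    exact ⟨hv.1, side_mono hT hab hbx hxa hv.2⟩
  · exact fun v _ _ => hw v

lemma sum_union_le {w : V → ℝ} (hw : ∀ v, 0 ≤ w v) (A B : Finset V) :
    ∑ v ∈ A ∪ B, w v ≤ ∑ v ∈ A, w v + ∑ v ∈ B, w v := by
  classical
  rw [← Finset.union_sdiff_self_eq_union, Finset.sum_union Finset.disjoint_sdiff]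
  exact add_le_add (le_refl _)
    (Finset.sum_le_sum_of_subset_of_nonneg Finset.sdiff_subset (fun v _ _ => hw v))

lemma sum_biUnion_le {ι : Type*} {w : V → ℝ} (hw : ∀ v, 0 ≤ w v) (s : Finset ι)
    (t : ι → Finset V) :
    ∑ v ∈ s.biUnion t, w v ≤ ∑ x ∈ s, ∑ v ∈ t x, w v := by
  classical
  induction s using Finset.induction with
  | empty => simp
  | insert _ _ hx ih =>
    rw [Finset.biUnion_insert, Finset.sum_insert hx]
    exact (sum_union_le hw _ _).trans (by gcongr)

/-- decomposition bound at a non-leaf endpoint -/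
lemma side_decomp (hT : G.IsTree) (w : V → ℝ) (hw : ∀ v, 0 ≤ w v) {a b : V}
    (hab : G.Adj a b) (hdb : G.degree b ≠ 1) :
    sideSum G w s(a,b) b ≤
      ∑ x ∈ (G.neighborFinset b).erase a, sideSum G w s(b,x) x := by
  classical
  refine le_trans ?_ (sum_biUnion_le hw _ _)
  apply Finset.sum_le_sum_of_subset_of_nonneg
  · intro v hv
    simp only [Finset.mem_filter, Finset.mem_univ, true_and] at hv
    have hvb : v ≠ b := by rintro rfl; exact hdb hv.1
    obtain ⟨x, hbx, hxa, hr⟩ := step hab hv.2 hvb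
    rw [Finset.mem_biUnion]
    refine ⟨x, ?_, ?_⟩
    · rw [Finset.mem_erase, mem_neighborFinset]; exact ⟨hxa, hbx⟩
    · simp only [Finset.mem_filter, Finset.mem_univ, true_and]
      exact ⟨hv.1, hr⟩
  · exact fun v _ _ => hw v


lemma sideSum_swap (G : SimpleGraph V) (w : V → ℝ) (x u c : V) :
    sideSum G w s(x,u) c = sideSum G w s(u,x) c := by rw [Sym2.eq_swap]

lemma heavy_of_adj (hT : G.IsTree) (w : V → ℝ) {W : ℝ}
    (hW : W = ∑ v ∈ Finset.univ.filter (fun v => G.degree v = 1), w v)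
    {u x : V} (hadj : G.Adj u x) :
    W/2 ≤ sideSum G w s(u,x) x ∨ W/2 ≤ sideSum G w s(x,u) u := by
  have h := side_partition hT w hadj
  rw [← hW] at h
  rw [sideSum_swap G w x u u]
  by_contra hc
  push_neg at hc
  linarith [hc.1, hc.2]

end Stmt7Aux

open Stmt7Aux in
open scoped Classical in
theorem stmt7 {V : Type*} [Fintype V] (G : SimpleGraph V) (hT : G.IsTree)
    (hdeg : ∀ v : V, G.degree v ≤ 3)
    (w : V → ℝ) (hw : ∀ v, 0 ≤ w v) (W : ℝ)
    (hW : W = ∑ v ∈ Finset.univ.filter (fun v => G.degree v = 1), w v)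
    (hWpos : 0 < W)
    (hleaves : 2 ≤ (Finset.univ.filter (fun v => G.degree v = 1)).card)
    (hcap : ∀ v, G.degree v = 1 → w v ≤ 3 / 4 * W) :
    ∃ a b : V, G.Adj a b ∧
      (∑ v ∈ Finset.univ.filter (fun v => G.degree v = 1 ∧
          (G.deleteEdges {s(a, b)}).Reachable a v), w v) ≤ 3 / 4 * W ∧
      (∑ v ∈ Finset.univ.filter (fun v => G.degree v = 1 ∧
          (G.deleteEdges {s(a, b)}).Reachable b v), w v) ≤ 3 / 4 * W := by
  classical
  set f : V × V → ℝ := fun p => sideSum G w s(p.1, p.2) p.2 with hf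
  set P : Finset (V × V) := Finset.univ.filter (fun p => G.Adj p.1 p.2 ∧ W/2 ≤ f p) with hP
  have hmemP : ∀ {c d : V}, G.Adj c d → W/2 ≤ sideSum G w s(c,d) d → (c, d) ∈ P := by
    intro c d h1 h2
    rw [hP, Finset.mem_filter]
    exact ⟨Finset.mem_univ _, h1, h2⟩
  have hPne : P.Nonempty := by
    obtain ⟨u, hu, v', hv', huv⟩ :=
      Finset.one_lt_card.mp (lt_of_lt_of_le one_lt_two hleaves)
    obtain ⟨pw⟩ := hT.isConnected.preconnected u v'
    cases pw with
    | nil => exact absurd rfl huv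
    | @cons _ x _ h q =>
      rcases heavy_of_adj hT w hW h with hc | hc
      · exact ⟨(u, x), hmemP h hc⟩
      · exact ⟨(x, u), hmemP h.symm (by rwa [sideSum_swap] at hc ⊢)⟩
  obtain ⟨p₀, hp₀, hmin⟩ := P.exists_min_image f hPne
  set P' := P.filter (fun r => f r ≤ f p₀) with hP'
  obtain ⟨q, hq, hmin2⟩ := P'.exists_min_image
    (fun r => (comp G s(r.1, r.2) r.2).card)
    ⟨p₀, Finset.mem_filter.mpr ⟨hp₀, le_refl _⟩⟩
  obtain ⟨a, b⟩ := q
  rw [hP', Finset.mem_filter] at hq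
  have hqP := hq.1
  rw [hP, Finset.mem_filter] at hqP
  obtain ⟨-, hab', hheavy⟩ := hqP
  have hab : G.Adj a b := hab'
  have hminf : ∀ r ∈ P, f (a, b) ≤ f r := fun r hr => hq.2.trans (hmin r hr)
  have hminc : ∀ r ∈ P, f r ≤ f (a, b) →
      (comp G s(a,b) b).card ≤ (comp G s(r.1, r.2) r.2).card := by
    intro r hr hfr
    exact hmin2 r (Finset.mem_filter.mpr ⟨hr, hfr.trans hq.2⟩)
  have hfab : f (a, b) = sideSum G w s(a,b) b := rfl
  have key : sideSum G w s(a,b) b ≤ 3/4 * W := by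
    by_contra hcon
    push_neg at hcon
    by_cases hdb : G.degree b = 1
    · have hwb : sideSum G w s(a,b) b = w b := by
        rw [sideSum]
        have hset : Finset.univ.filter (fun v => G.degree v = 1 ∧
            (G.deleteEdges {s(a,b)}).Reachable b v) = {b} := by
          ext v
          simp only [Finset.mem_filter, Finset.mem_univ, true_and, Finset.mem_singleton]
          constructor
          · intro hv; exact leaf_comp hT hab hdb hv.2
          · rintro rfl; exact ⟨hdb, SimpleGraph.Reachable.refl _⟩
        rw [hset, Finset.sum_singleton]
      rw [hwb] at hcon
      exact absurd (hcap b hdb) (not_le.mpr hcon)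
    · have hdb1 : 1 ≤ G.degree b := by
        rw [← SimpleGraph.card_neighborFinset_eq_degree]
        exact Finset.card_pos.mpr ⟨a, by rw [SimpleGraph.mem_neighborFinset]; exact hab.symm⟩
      set s := (G.neighborFinset b).erase a with hs
      have hamem : a ∈ G.neighborFinset b := by
        rw [SimpleGraph.mem_neighborFinset]; exact hab.symm
      have hcards : (s.card : ℝ) ≤ 2 := by
        have h1 : s.card = G.degree b - 1 := by
          rw [hs, Finset.card_erase_of_mem hamem, SimpleGraph.card_neighborFinset_eq_degree]
        have := hdeg b
        have : s.card ≤ 2 := by omega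
        exact_mod_cast this
      have hsne : s.Nonempty := by
        rw [← Finset.card_pos, hs, Finset.card_erase_of_mem hamem,
          SimpleGraph.card_neighborFinset_eq_degree]
        omega
      have hxlt : ∀ x ∈ s, sideSum G w s(b,x) x < W/4 := by
        intro x hxs
        rw [hs, Finset.mem_erase, SimpleGraph.mem_neighborFinset] at hxs
        obtain ⟨hxa, hbx⟩ := hxs
        rcases lt_or_ge (sideSum G w s(b,x) x) (W/2) with hlight | hheavy2
        · have hpart := side_partition hT w hbx
          rw [← hW] at hpart
          have hPmem : (x, b) ∈ P :=
            hmemP hbx.symm (by rw [sideSum_swap]; linarith)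
          have hle := hminf (x, b) hPmem
          have hfx : f (x, b) = sideSum G w s(b,x) b := by
            rw [hf]; exact sideSum_swap G w x b b
          rw [hfx, hfab] at hle
          linarith
        · exfalso
          have hle := side_le hT w hw hab hbx hxa
          have hPmem : (b, x) ∈ P := hmemP hbx hheavy2
          have hc1 := hminc (b, x) hPmem (by rw [hfab]; exact hle)
          exact absurd hc1 (not_le.mpr (comp_card_lt hT hab hbx hxa))
      have hdec : sideSum G w s(a,b) b ≤
          ∑ x ∈ (G.neighborFinset b).erase a, sideSum G w s(b,x) x :=
        side_decomp hT w hw hab hdb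
      have hsum : ∑ x ∈ s, sideSum G w s(b,x) x < W/2 := by
        calc ∑ x ∈ s, sideSum G w s(b,x) x < ∑ _x ∈ s, W/4 :=
              Finset.sum_lt_sum_of_nonempty hsne hxlt
        _ = (s.card : ℝ) * (W/4) := by rw [Finset.sum_const, nsmul_eq_mul]
        _ ≤ 2 * (W/4) := by
              apply mul_le_mul_of_nonneg_right hcards
              linarith
        _ = W/2 := by ring
      rw [← hs] at hdec
      linarith
  refine ⟨a, b, hab, ?_, key⟩
  have hpart := side_partition hT w hab
  rw [← hW] at hpart
  show sideSum G w s(a,b) a ≤ 3/4 * W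
  linarith
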